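/- Let n ≥ 2, let Λ₁ and Λ⁺ be as follows: Λ₁ = {(t,x,τ,ξ,t',x',τ',ξ') ∈ (ℝ×ℝ^n×ℝ×ℝ^n)² : ξ ≠ 0, x = x' + (t−t')ξ/‖ξ‖, (τ = ‖ξ‖ or τ = −‖ξ‖), τ' = −τ, ξ' = −ξ} and Λ⁺ = {(t,x,τ,ξ,z,η) ∈ (ℝ×ℝ^n×ℝ×ℝ^n)×(ℝ^n×ℝ^n) : η ≠ 0, x = z + tη/‖η‖, ξ = −η, τ = ‖η‖}. In the ambient space V = (ℝ×ℝ^n×ℝ×ℝ^n)³ × (ℝ^n×ℝ^n), set 𝒳 = Λ₁ × Λ⁺ (Λ₁ occupying the first two blocks of ℝ^{2(n+1)} and Λ⁺ the last block of ℝ^{2(n+1)} together with the ℝ^{2n} block) and 𝒴 = {(p₁,p₂,q₁,q₂) ∈ V : p₂ = q₁}. Then for every point w ∈ 𝒳 ∩ 𝒴, the tangent cone of 𝒳 ∩ 𝒴 at w equals the intersection of the tangent cone of 𝒳 at w with the tangent cone of 𝒴 at w: tangentConeAt ℝ (𝒳∩𝒴) w = (tangentConeAt ℝ 𝒳 w)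 ∩ (tangentConeAt ℝ 𝒴 w). -/

import Mathlib

open scoped Real

/-- Phase space point `(t, x, τ, ξ)` of `T^*ℝ^{1+n}`. -/
abbrev Phase (n : ℕ) :=
  ℝ × EuclideanSpace ℝ (Fin n) × ℝ × EuclideanSpace ℝ (Fin n)

/-- Point `(z, η)` of `T^*ℝ^n`. -/
abbrev Base (n : ℕ) :=
  EuclideanSpace ℝ (Fin n) × EuclideanSpace ℝ (Fin n)

/-- The flow-out Lagrangian `Λ₁` of the normal operator of the Minkowski light ray
transform. -/
def Lambda1 (n : ℕ) : Set (Phase n × Phase n) := fun p =>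
  p.1.2.2.2 ≠ 0 ∧
  p.1.2.1 = p.2.2.1 + (p.1.1 - p.2.1) • (‖p.1.2.2.2‖⁻¹ • p.1.2.2.2) ∧
  (p.1.2.2.1 = ‖p.1.2.2.2‖ ∨ p.1.2.2.1 = -‖p.1.2.2.2‖) ∧
  p.2.2.2.1 = -p.1.2.2.1 ∧
  p.2.2.2.2 = -p.1.2.2.2

/-- The twisted canonical relation `Λ⁺` of the forward half-wave parametrix. -/
def LambdaPlus (n : ℕ) : Set (Phase n × Base n) := fun p =>
  p.2.2 ≠ 0 ∧
  p.1.2.1 = p.2.1 + p.1.1 • (‖p.2.2‖⁻¹ • p.2.2) ∧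
  p.1.2.2.2 = -p.2.2 ∧
  p.1.2.2.1 = ‖p.2.2‖

/-!
Near a point of `𝒳 ∩ 𝒴` the factor `Λ₁` is on its branch `τ = -‖ξ‖`, and both Lagrangians are
graphs over light-ray data: a point of `Λ⁺` over `(z, η)` is `lightRay (t, z, η)`, and a point
`(p, q)` of that branch of `Λ₁` is determined by `p = negCovector (lightRay (t, lightRayBase q))`.
Differentiating these identities shows that a vector tangent to both `𝒳` and `𝒴` is the
derivative of the map `(t₁, t₂, b) ↦ (negCovector γ_b(t₁), γ_b(t₂), γ_b(t₂), b)`, where `γ_b` is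
the light ray over `b`. That map sends a neighbourhood of its base point into `𝒳 ∩ 𝒴`, so its
derivative takes values in the tangent cone of `𝒳 ∩ 𝒴`.
-/

open Filter Set Topology

section TangentCone

variable {E F : Type*} [NormedAddCommGroup E] [NormedSpace ℝ E]
  [NormedAddCommGroup F] [NormedSpace ℝ F]

theorem HasFDerivAt.eq_of_mem_tangentConeAt {f g : E → F} {f' g' : E →L[ℝ] F} {s : Set E}
    {x y : E} (hf : HasFDerivAt f f' x) (hg : HasFDerivAt g g' x) (hfg : f =ᶠ[𝓝[s] x] g)
    (hx : x ∈ s) (hy : y ∈ tangentConeAt ℝ s x) : f' y = g' y :=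
  hf.hasFDerivWithinAt.unique_on
    (hg.hasFDerivWithinAt.congr_of_eventuallyEq hfg (hfg.eq_of_nhdsWithin hx)) hy

theorem HasFDerivAt.mem_tangentConeAt {φ : F → E} {φ' : F →L[ℝ] E} {u : F} {s : Set E}
    (hφ : HasFDerivAt φ φ' u) (hs : ∀ᶠ v in 𝓝 u, φ v ∈ s) (v : F) :
    φ' v ∈ tangentConeAt ℝ s (φ u) := by
  have hv : v ∈ tangentConeAt ℝ {v | φ v ∈ s} u := by
    rw [tangentConeAt_of_mem_nhds hs]; trivial
  exact tangentConeAt_mono (image_preimage_subset φ s)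
    (hφ.hasFDerivWithinAt.mapsTo_tangent_cone hv)

theorem ContinuousLinearMap.mapsTo_tangentConeAt (L : E →L[ℝ] F) {s : Set E} {t : Set F}
    {x : E} (h : MapsTo L s t) : MapsTo L (tangentConeAt ℝ s x) (tangentConeAt ℝ t (L x)) :=
  fun _ hy => tangentConeAt_mono h.image_subset
    (L.hasFDerivAt.hasFDerivWithinAt.mapsTo_tangent_cone hy)

end TangentCone

section LightRay

variable {E : Type*} [NormedAddCommGroup E] [InnerProductSpace ℝ E]

noncomputable def lightRay (u : ℝ × E × E) : ℝ × E × ℝ × E :=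
  (u.1, u.2.1 + u.1 • (‖u.2.2‖⁻¹ • u.2.2), ‖u.2.2‖, -u.2.2)

noncomputable def lightRayBase (p : ℝ × E × ℝ × E) : E × E :=
  (p.2.1 + p.1 • (‖p.2.2.2‖⁻¹ • p.2.2.2), -p.2.2.2)

def negCovector : (ℝ × E × ℝ × E) →L[ℝ] ℝ × E × ℝ × E :=
  (ContinuousLinearMap.id ℝ ℝ).prodMap
    ((ContinuousLinearMap.id ℝ E).prodMap (-ContinuousLinearMap.id ℝ (ℝ × E)))

@[simp]
theorem negCovector_apply (p : ℝ × E × ℝ × E) :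
    negCovector p = (p.1, p.2.1, -p.2.2.1, -p.2.2.2) := rfl

@[simp]
theorem lightRayBase_lightRay (u : ℝ × E × E) : lightRayBase (lightRay u) = u.2 := by
  simp [lightRayBase, lightRay]

theorem differentiableAt_normalize {η : E} (hη : η ≠ 0) :
    DifferentiableAt ℝ (fun a : E => ‖a‖⁻¹ • a) η :=
  ((differentiableAt_id.norm ℝ hη).inv (norm_ne_zero_iff.2 hη)).smul differentiableAt_id

theorem differentiableAt_lightRay {u : ℝ × E × E} (hu : u.2.2 ≠ 0) :
    DifferentiableAt ℝ lightRay u := by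
  have hN := (differentiableAt_snd.comp u differentiableAt_snd).norm ℝ hu
  have hD := (differentiableAt_normalize hu).comp u
    (differentiableAt_snd.comp u differentiableAt_snd)
  unfold lightRay
  fun_prop

theorem differentiableAt_lightRayBase {p : ℝ × E × ℝ × E} (hp : p.2.2.2 ≠ 0) :
    DifferentiableAt ℝ lightRayBase p := by
  have hD := (differentiableAt_normalize hp).comp p
    (differentiableAt_snd.comp p (differentiableAt_snd.comp p differentiableAt_snd))
  unfold lightRayBase
  fun_prop

end LightRay

section Lagrangians

variable {n : ℕ}

theorem mem_LambdaPlus_iff_eq_lightRay {v : Phase n × Base n} :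
    v ∈ LambdaPlus n ↔ v.2.2 ≠ 0 ∧ v.1 = lightRay (v.1.1, v.2) := by
  obtain ⟨⟨t, x, τ, ξ⟩, z, η⟩ := v
  simp only [lightRay, Prod.mk.injEq, true_and]
  exact ⟨fun ⟨hη, hx, hξ, hτ⟩ => ⟨hη, hx, hτ, hξ⟩, fun ⟨hη, hx, hτ, hξ⟩ => ⟨hη, hx, hξ, hτ⟩⟩

theorem eq_negCovector_lightRay_of_mem_Lambda1 {v : Phase n × Phase n} (hv : v ∈ Lambda1 n)
    (hτ : v.1.2.2.1 < 0) : v.1 = negCovector (lightRay (v.1.1, lightRayBase v.2)) := by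
  obtain ⟨⟨t, x, τ, ξ⟩, t', x', τ', ξ'⟩ := v
  obtain ⟨-, hx, hτξ, -, hξ'⟩ := hv
  simp only at hτ hx hτξ hξ'
  subst hx hξ'
  obtain rfl : τ = -‖ξ‖ := hτξ.resolve_left fun h => (norm_nonneg ξ).not_gt (h ▸ hτ)
  simp only [negCovector_apply, lightRay, lightRayBase, norm_neg, neg_neg, Prod.mk.injEq,
    true_and, and_true]
  module

theorem lightRay_mem_Lambda1 {b : Base n} (hb : b.2 ≠ 0) (t t' : ℝ) :
    (negCovector (lightRay (t, b)), lightRay (t', b)) ∈ Lambda1 n := by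
  simp only [negCovector_apply, lightRay, neg_neg]
  refine ⟨hb, ?_, Or.inr rfl, (neg_neg _).symm, rfl⟩
  module

theorem LambdaPlus.fst_eq_of_mem_tangentConeAt {p y : Phase n × Base n} (hp : p ∈ LambdaPlus n)
    (hy : y ∈ tangentConeAt ℝ (LambdaPlus n) p) :
    y.1 = fderiv ℝ lightRay (p.1.1, p.2) (y.1.1, y.2) := by
  have hP := (hasFDerivAt_id (𝕜 := ℝ) p).fst.fst.prodMk (hasFDerivAt_id p).snd
  have hg := (differentiableAt_lightRay (mem_LambdaPlus_iff_eq_lightRay.1 hp).1).hasFDerivAt.comp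
    p hP
  simpa using hasFDerivAt_fst.eq_of_mem_tangentConeAt hg
    (eventually_nhdsWithin_of_forall fun v hv => (mem_LambdaPlus_iff_eq_lightRay.1 hv).2) hp hy

theorem LambdaPlus.snd_eq_of_mem_tangentConeAt {p y : Phase n × Base n} (hp : p ∈ LambdaPlus n)
    (hy : y ∈ tangentConeAt ℝ (LambdaPlus n) p) :
    y.2 = fderiv ℝ lightRayBase p.1 y.1 := by
  have hp' := mem_LambdaPlus_iff_eq_lightRay.1 hp
  have hξ : p.1.2.2.2 ≠ 0 := by rw [hp'.2]; simpa [lightRay] using hp'.1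
  have hg := (differentiableAt_lightRayBase hξ).hasFDerivAt.comp p hasFDerivAt_fst
  refine hasFDerivAt_snd.eq_of_mem_tangentConeAt hg
    (eventually_nhdsWithin_of_forall fun v hv => ?_) hp hy
  simp only [Function.comp_apply]
  rw [(mem_LambdaPlus_iff_eq_lightRay.1 hv).2, lightRayBase_lightRay]

theorem Lambda1.fst_eq_of_mem_tangentConeAt {p y : Phase n × Phase n} (hp : p ∈ Lambda1 n)
    (hτ : p.1.2.2.1 < 0) (hy : y ∈ tangentConeAt ℝ (Lambda1 n) p) :
    y.1 = negCovector
      (fderiv ℝ lightRay (p.1.1, lightRayBase p.2) (y.1.1, fderiv ℝ lightRayBase p.2 y.2)) := by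
  have hξ : p.1.2.2.2 ≠ 0 := hp.1
  have hξ' : p.2.2.2.2 = -p.1.2.2.2 := hp.2.2.2.2
  have hB := (differentiableAt_lightRayBase (p := p.2) (by simpa [hξ'] using hξ)).hasFDerivAt
  have hL := (differentiableAt_lightRay (u := (p.1.1, lightRayBase p.2))
    (by simpa [lightRayBase, hξ'] using hξ)).hasFDerivAt
  have hg := negCovector.hasFDerivAt.comp p
    (hL.comp p (hasFDerivAt_fst.fst.prodMk (hB.comp p hasFDerivAt_snd)))
  have hbranch :
      ∀ᶠ v in 𝓝[Lambda1 n] p, v.1 = negCovector (lightRay (v.1.1, lightRayBase v.2)) := by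
    have hopen : {v : Phase n × Phase n | v.1.2.2.1 < 0} ∈ 𝓝 p :=
      (isOpen_lt (by fun_prop) continuous_const).mem_nhds hτ
    filter_upwards [nhdsWithin_le_nhds hopen, self_mem_nhdsWithin] with v hvτ hv
    exact eq_negCovector_lightRay_of_mem_Lambda1 hv hvτ
  simpa using hasFDerivAt_fst.eq_of_mem_tangentConeAt hg hbranch hp hy

end Lagrangians

section Intersection

def lagrangianProduct (n : ℕ) : Set (Phase n × Phase n × Phase n × Base n) :=
  {v | (v.1, v.2.1) ∈ Lambda1 n ∧ (v.2.2.1, v.2.2.2) ∈ LambdaPlus n}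

def partialDiagonal (n : ℕ) : Set (Phase n × Phase n × Phase n × Base n) :=
  {v | v.2.1 = v.2.2.1}

variable {n : ℕ}

noncomputable def intersectionParam (u : ℝ × ℝ × Base n) :
    Phase n × Phase n × Phase n × Base n :=
  (negCovector (lightRay (u.1, u.2.2)), lightRay (u.2.1, u.2.2), lightRay (u.2.1, u.2.2), u.2.2)

theorem intersectionParam_mem {u : ℝ × ℝ × Base n} (hu : u.2.2.2 ≠ 0) :
    intersectionParam u ∈ lagrangianProduct n ∩ partialDiagonal n :=
  ⟨⟨lightRay_mem_Lambda1 hu _ _, mem_LambdaPlus_iff_eq_lightRay.2 ⟨hu, rfl⟩⟩, rfl⟩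

theorem intersectionParam_fderiv_mem_tangentConeAt {u : ℝ × ℝ × Base n} (hu : u.2.2.2 ≠ 0)
    (v : ℝ × ℝ × Base n) :
    (negCovector (fderiv ℝ lightRay (u.1, u.2.2) (v.1, v.2.2)),
      fderiv ℝ lightRay (u.2.1, u.2.2) (v.2.1, v.2.2),
      fderiv ℝ lightRay (u.2.1, u.2.2) (v.2.1, v.2.2), v.2.2) ∈
      tangentConeAt ℝ (lagrangianProduct n ∩ partialDiagonal n) (intersectionParam u) := by
  have hL₁ := (differentiableAt_lightRay (u := (u.1, u.2.2)) hu).hasFDerivAt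
  have hL₂ := (differentiableAt_lightRay (u := (u.2.1, u.2.2)) hu).hasFDerivAt
  have hid := hasFDerivAt_id (𝕜 := ℝ) u
  have hP₁ := hid.fst.prodMk hid.snd.snd
  have hP₂ := hid.snd.fst.prodMk hid.snd.snd
  have hφ := (negCovector.hasFDerivAt.comp u (hL₁.comp u hP₁)).prodMk
    ((hL₂.comp u hP₂).prodMk ((hL₂.comp u hP₂).prodMk hid.snd.snd))
  have hopen : {u : ℝ × ℝ × Base n | u.2.2.2 ≠ 0} ∈ 𝓝 u :=
    (isOpen_ne_fun (by fun_prop) continuous_const).mem_nhds hu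
  exact hφ.mem_tangentConeAt (s := lagrangianProduct n ∩ partialDiagonal n)
    (mem_of_superset hopen fun _ => intersectionParam_mem) v

variable {w : Phase n × Phase n × Phase n × Base n}

theorem lightRayBase_eq_of_mem_inter (hw : w ∈ lagrangianProduct n ∩ partialDiagonal n) :
    lightRayBase w.2.1 = w.2.2.2 := by
  rw [hw.2, (mem_LambdaPlus_iff_eq_lightRay.1 hw.1.2).2, lightRayBase_lightRay]

theorem fst_tau_neg_of_mem_inter (hw : w ∈ lagrangianProduct n ∩ partialDiagonal n) :
    w.1.2.2.1 < 0 := by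
  obtain ⟨hη, hray⟩ := mem_LambdaPlus_iff_eq_lightRay.1 hw.1.2
  have : w.2.1.2.2.1 = ‖w.2.2.2.2‖ := by rw [hw.2, hray]; rfl
  linarith [hw.1.1.2.2.2.1, norm_pos_iff.2 hη]

theorem intersectionParam_eq (hw : w ∈ lagrangianProduct n ∩ partialDiagonal n) :
    intersectionParam (w.1.1, w.2.1.1, w.2.2.2) = w := by
  have h1 := eq_negCovector_lightRay_of_mem_Lambda1 hw.1.1 (fst_tau_neg_of_mem_inter hw)
  rw [lightRayBase_eq_of_mem_inter hw] at h1
  have h2 : w.2.1 = lightRay (w.2.1.1, w.2.2.2) := by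
    rw [hw.2]; exact (mem_LambdaPlus_iff_eq_lightRay.1 hw.1.2).2
  exact Prod.ext h1.symm (Prod.ext h2.symm (Prod.ext (h2.symm.trans hw.2) rfl))

theorem eq_of_mem_tangentConeAt_inter (hw : w ∈ lagrangianProduct n ∩ partialDiagonal n)
    {y : Phase n × Phase n × Phase n × Base n}
    (hyX : y ∈ tangentConeAt ℝ (lagrangianProduct n) w)
    (hyY : y ∈ tangentConeAt ℝ (partialDiagonal n) w) :
    y = (negCovector (fderiv ℝ lightRay (w.1.1, w.2.2.2) (y.1.1, y.2.2.2)),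
      fderiv ℝ lightRay (w.2.1.1, w.2.2.2) (y.2.1.1, y.2.2.2),
      fderiv ℝ lightRay (w.2.1.1, w.2.2.2) (y.2.1.1, y.2.2.2), y.2.2.2) := by
  have hdiag : w.2.1 = w.2.2.1 := hw.2
  have hyX₁ := ((ContinuousLinearMap.fst ℝ (Phase n) _).prod
    ((ContinuousLinearMap.fst ℝ (Phase n) _).comp (ContinuousLinearMap.snd ℝ (Phase n) _))
      ).mapsTo_tangentConeAt (fun v hv => hv.1) hyX
  have hyX₂ := ((ContinuousLinearMap.snd ℝ (Phase n) (Phase n × Base n)).comp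
    (ContinuousLinearMap.snd ℝ (Phase n) _)).mapsTo_tangentConeAt (fun v hv => hv.2) hyX
  have hy₁ := Lambda1.fst_eq_of_mem_tangentConeAt hw.1.1 (fst_tau_neg_of_mem_inter hw) hyX₁
  have hy₃ := LambdaPlus.fst_eq_of_mem_tangentConeAt hw.1.2 hyX₂
  have hy₄ := LambdaPlus.snd_eq_of_mem_tangentConeAt hw.1.2 hyX₂
  have hid := hasFDerivAt_id (𝕜 := ℝ) w
  have hy₂ : y.2.1 = y.2.2.1 := hid.snd.fst.eq_of_mem_tangentConeAt hid.snd.snd.fst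
    (eventually_nhdsWithin_of_forall fun _ hv => hv) hw.2 hyY
  simp only [ContinuousLinearMap.prod_apply, ContinuousLinearMap.comp_apply,
    ContinuousLinearMap.coe_fst', ContinuousLinearMap.coe_snd'] at hy₁ hy₃ hy₄
  rw [lightRayBase_eq_of_mem_inter hw, hdiag, hy₂, ← hy₄] at hy₁
  rw [← hdiag] at hy₃
  refine Prod.ext hy₁ (Prod.ext ?_ (Prod.ext ?_ rfl)) <;> simpa only [hy₂] using hy₃

end Intersection

theorem clean_intersection_general (n : ℕ) :
    ∀ w ∈ ({v : Phase n × Phase n × Phase n × Base n |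
              (v.1, v.2.1) ∈ Lambda1 n ∧ (v.2.2.1, v.2.2.2) ∈ LambdaPlus n} ∩
            {v : Phase n × Phase n × Phase n × Base n | v.2.1 = v.2.2.1}),
      tangentConeAt ℝ
          ({v : Phase n × Phase n × Phase n × Base n |
              (v.1, v.2.1) ∈ Lambda1 n ∧ (v.2.2.1, v.2.2.2) ∈ LambdaPlus n} ∩
           {v : Phase n × Phase n × Phase n × Base n | v.2.1 = v.2.2.1}) w
        = tangentConeAt ℝ
            {v : Phase n × Phase n × Phase n × Base n |
              (v.1, v.2.1) ∈ Lambda1 n ∧ (v.2.2.1, v.2.2.2) ∈ LambdaPlus n} w ∩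
          tangentConeAt ℝ
            {v : Phase n × Phase n × Phase n × Base n | v.2.1 = v.2.2.1} w := by
  intro w hw
  refine Subset.antisymm (subset_inter (tangentConeAt_mono inter_subset_left)
    (tangentConeAt_mono inter_subset_right)) fun y ⟨hyX, hyY⟩ => ?_
  have hy := intersectionParam_fderiv_mem_tangentConeAt (u := (w.1.1, w.2.1.1, w.2.2.2))
    hw.1.2.1 (y.1.1, y.2.1.1, y.2.2.2)
  rw [intersectionParam_eq hw] at hy
  rwa [eq_of_mem_tangentConeAt_inter hw hyX hyY]

/-- Clean intersection of `Λ₁ × Λ⁺` with the partial diagonal, expressed through tangent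
cones: at every intersection point, the tangent cone of the intersection is the
intersection of the tangent cones. -/
theorem clean_intersection (n : ℕ) (hn : 2 ≤ n) :
    ∀ w ∈ ({v : Phase n × Phase n × Phase n × Base n |
              (v.1, v.2.1) ∈ Lambda1 n ∧ (v.2.2.1, v.2.2.2) ∈ LambdaPlus n} ∩
            {v : Phase n × Phase n × Phase n × Base n | v.2.1 = v.2.2.1}),
      tangentConeAt ℝ
          ({v : Phase n × Phase n × Phase n × Base n |
              (v.1, v.2.1) ∈ Lambda1 n ∧ (v.2.2.1, v.2.2.2) ∈ LambdaPlus n} ∩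
           {v : Phase n × Phase n × Phase n × Base n | v.2.1 = v.2.2.1}) w
        = tangentConeAt ℝ
            {v : Phase n × Phase n × Phase n × Base n |
              (v.1, v.2.1) ∈ Lambda1 n ∧ (v.2.2.1, v.2.2.2) ∈ LambdaPlus n} w ∩
          tangentConeAt ℝ
            {v : Phase n × Phase n × Phase n × Base n | v.2.1 = v.2.2.1} w :=
  clean_intersection_general n
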